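/- In the group G_II, the elements g3 g4 g3 and g2 do not commute; that is, the commutator [g3 g4 g3, g2^{-1}] is a nontrivial element of G_II. (This is the group-theoretic content of Theorem 4.3: since [g3 g4 g3, g2^{-1}] is a defining generator of Liedtke's subgroup C^Aff for the Type II surface -- the images of g3 g4 g3^{-1} and g2 in S_5 being the disjoint transpositions (2 4) and (1 3) -- the subgroup C^Aff is non-trivial, giving a counter-example to Liedtke's question for generic projections of degree 5.) -/

import Mathlib

namespace Stmt14

open scoped commutatorElement

/-- Generators: `i ↦ g(i+1)` for `i = 0,…,4`. -/
def g (i : Fin 5) : FreeGroup (Fin 5) := FreeGroup.of i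

/-- The braid relator `x y x (y x y)⁻¹`, i.e. `<x,y> = e`. -/
def braid (x y : FreeGroup (Fin 5)) : FreeGroup (Fin 5) := x * y * x * (y * x * y)⁻¹

/-- The commutator relator `x y x⁻¹ y⁻¹`, i.e. `[x,y] = e`. -/
def comm (x y : FreeGroup (Fin 5)) : FreeGroup (Fin 5) := x * y * x⁻¹ * y⁻¹

/-- Relators of the group `G_II` from Theorem 3.5 (union of the Cayley cubic degeneration
and two planes, Type II). -/
def rels : Set (FreeGroup (Fin 5)) :=
  { (g 0) ^ 2, (g 1) ^ 2, (g 2) ^ 2, (g 3) ^ 2, (g 4) ^ 2,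
    comm (g 0) (g 2), comm (g 0) (g 4), comm (g 1) (g 4),
    comm (g 0) (g 1 * g 3 * g 1), comm (g 3) (g 4),
    braid (g 0) (g 1), braid (g 1) (g 2), braid (g 1) (g 3),
    braid (g 2) (g 3), braid (g 2) (g 4) }

/-- The presented group `G_II`. -/
abbrev GII := PresentedGroup rels

/-!
Map `G_II` to `GL₅(ℤ)` by sending the generator `g (i+1)` (`PresentedGroup.of i`) to the
reflection `sᵢ x = x - B(eᵢ, x) eᵢ` for the symmetric form `B = cartanForm`. The reflection
`s₂ s₃ s₂` has root `s₂ e₃ = e₂ + e₃`, and `B(e₁, e₂ + e₃) = -2 ≠ 0`, so it does not commute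
with `s₁`. The positive entry `B 0 3 = 1` is what makes `s₀` commute with `s₁ s₃ s₁`, whose root
`e₁ + e₃` is `B`-orthogonal to `e₀`.
-/

section Reflection

variable {R n : Type*} [Ring R] [Fintype n] [DecidableEq n]

open Matrix

theorem _root_.Matrix.one_sub_vecMulVec_mul_self {u v : n → R} (h : v ⬝ᵥ u = 2) :
    (1 - vecMulVec u v) * (1 - vecMulVec u v) = 1 := by
  rw [sub_mul, mul_sub, mul_sub, vecMulVec_mul_vecMulVec, h, two_smul, vecMulVec_add]
  noncomm_ring

def _root_.Matrix.reflection (B : Matrix n n R) (i : n) : Matrix n n R :=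
  1 - vecMulVec (Pi.single i 1) (B i)

theorem _root_.Matrix.reflection_mul_self {B : Matrix n n R} {i : n} (h : B i i = 2) :
    B.reflection i * B.reflection i = 1 :=
  one_sub_vecMulVec_mul_self (by rwa [dotProduct_single_one])

end Reflection

def cartanForm : Matrix (Fin 5) (Fin 5) ℤ :=
  !![2, -1, 0, 1, 0; -1, 2, -1, -1, 0; 0, -1, 2, -1, -1; 1, -1, -1, 2, 0; 0, 0, -1, 0, 2]

theorem cartanForm_diag : ∀ i, cartanForm i i = 2 := by decide

def reflectionUnit (i : Fin 5) : (Matrix (Fin 5) (Fin 5) ℤ)ˣ :=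
  have h := Matrix.reflection_mul_self (cartanForm_diag i)
  ⟨cartanForm.reflection i, cartanForm.reflection i, h, h⟩

theorem reflectionUnit_rels : ∀ r ∈ rels, FreeGroup.lift reflectionUnit r = 1 := by
  simp only [rels, Set.mem_insert_iff, Set.mem_singleton_iff, forall_eq_or_imp, forall_eq,
    g, comm, braid, map_mul, map_pow, map_inv, FreeGroup.lift_apply_of]
  refine ⟨?_, ?_, ?_, ?_, ?_, ?_, ?_, ?_, ?_, ?_, ?_, ?_, ?_, ?_, ?_⟩ <;> ext1 <;> decide

def reflectionRep : GII →* (Matrix (Fin 5) (Fin 5) ℤ)ˣ :=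
  PresentedGroup.toGroup reflectionUnit_rels

theorem not_commute_reflectionUnit :
    ¬Commute (reflectionUnit 2 * reflectionUnit 3 * reflectionUnit 2) (reflectionUnit 1) := by
  rw [commute_iff_eq, Units.ext_iff]
  decide

/-- Theorem 4.3 (group-theoretic content): in `G_II`, the elements `g3 g4 g3` and `g2` do
not commute, i.e. the commutator `[g3 g4 g3, g2⁻¹]` is a nontrivial element of `G_II`.
Hence Liedtke's subgroup `C^Aff` is non-trivial for the Type II degree-5 surface. -/
theorem commutator_ne_one :
    ⁅(PresentedGroup.of 2 * PresentedGroup.of 3 * PresentedGroup.of 2 : GII),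
      (PresentedGroup.of 1 : GII)⁻¹⁆ ≠ 1 := by
  rw [Ne, commutatorElement_eq_one_iff_commute, Commute.inv_right_iff]
  intro h
  apply not_commute_reflectionUnit
  simpa only [map_mul, reflectionRep, PresentedGroup.toGroup.of] using h.map reflectionRep

end Stmt14
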